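/- Let φ be a repulsive potential on ℝ^d, Λ ⊂ ℝ^d a region, and let 𝛌 be a bounded, totally zero-free activity function on Λ. Then there exists ε > 0 such that for every η > 0 there exists δ > 0 so that: for all activity functions 𝛌′, 𝛌″ on Λ with sup_x|𝛌′(x)−𝛌(x)| < ε and sup_x|𝛌″(x)−𝛌(x)| < ε, one has Z_Λ(𝛌′) ≠ 0 and Z_Λ(𝛌″) ≠ 0, and moreover if sup_x|𝛌′(x)−𝛌″(x)| < δ then |ρ_{𝛌′}(v) − ρ_{𝛌″}(v)| < η for every v ∈ Λ. (Lemma 2.6: ρ_{𝛌′}(v) is uniformly continuous in 𝛌′ near 𝛌, with modulus of continuity uniform in v.) -/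

import Mathlib

open MeasureTheory Filter

noncomputable section

/-- Euclidean space ℝ^d. -/
abbrev Euc (d : ℕ) := EuclideanSpace ℝ (Fin d)

/-- `e^{-t}` for `t ∈ [0,∞]`, with the convention `e^{-∞} = 0`. -/
def expNeg (t : ENNReal) : ℝ := if t = ⊤ then 0 else Real.exp (-t.toReal)

/-- The Boltzmann pair weight `∏_{1 ≤ i < j ≤ k} e^{-φ(x_i - x_j)}`. -/
def pairWeight {d : ℕ} (φ : Euc d → ENNReal) (k : ℕ) (x : Fin k → Euc d) : ℝ :=
  ∏ p ∈ Finset.univ.filter (fun p : Fin k × Fin k => p.1 < p.2), expNeg (φ (x p.1 - x p.2))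

/-- The partition function `Z_Λ(𝛌)` of a complex activity function `𝛌` on a region `Λ`. -/
def ZΛ {d : ℕ} (φ : Euc d → ENNReal) (Λ : Set (Euc d)) (lam : Euc d → ℂ) : ℂ :=
  ∑' k : ℕ, ((Nat.factorial k : ℂ))⁻¹ *
    ∫ x in Set.univ.pi (fun _ : Fin k => Λ),
      (∏ i, lam (x i)) * ((pairWeight φ k x : ℝ) : ℂ)

/-- The one-point density `ρ_𝛌(v) = 𝛌(v) Z_Λ(𝛌 e^{-φ(v-·)}) / Z_Λ(𝛌)`. -/
def densityΛ {d : ℕ} (φ : Euc d → ENNReal) (Λ : Set (Euc d)) (lam : Euc d → ℂ)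
    (v : Euc d) : ℂ :=
  lam v * ZΛ φ Λ (fun x => lam x * ((expNeg (φ (v - x)) : ℝ) : ℂ)) / ZΛ φ Λ lam

/-- `𝛌` is totally zero-free on `Λ`: `Z_Λ(α·𝛌) ≠ 0` for all measurable `α : ℝ^d → [0,1]`. -/
def TotallyZeroFreeOn {d : ℕ} (φ : Euc d → ENNReal) (Λ : Set (Euc d))
    (lam : Euc d → ℂ) : Prop :=
  ∀ α : Euc d → ℝ, Measurable α → (∀ x, α x ∈ Set.Icc (0 : ℝ) 1) →
    ZΛ φ Λ (fun x => (α x : ℂ) * lam x) ≠ 0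

/-!
Expanding `Z_Λ` into its `k`-particle terms, an activity `μ₁` within `δ` (in sup norm) of an
activity `μ₂` bounded by `M` changes the `k`-th term by at most
`|Λ|^k ((M + δ)^k - M^k) / k!`, because all Boltzmann weights lie in `[0, 1]`. Summing,
`|Z_Λ(μ₁) - Z_Λ(μ₂)| ≤ δ |Λ| e^{|Λ|(M + δ)}`, so `Z_Λ` is locally Lipschitz for the sup norm.
Total zero-freeness (with `α = 1`) gives `Z_Λ(𝛌) ≠ 0`, hence `|Z_Λ| ≥ |Z_Λ(𝛌)| / 2` on a ball
around `𝛌`. The density is `𝛌(v) Z_Λ(𝛌 e^{-φ(v-·)}) / Z_Λ(𝛌)`, and the activities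
`𝛌 e^{-φ(v-·)}` satisfy the same bounds as `𝛌` for every `v`; a quotient of Lipschitz
quantities with denominator bounded away from `0` is Lipschitz, uniformly in `v`.
-/

lemma expNeg_nonneg (t : ENNReal) : 0 ≤ expNeg t := by
  unfold expNeg
  split_ifs <;> positivity

lemma expNeg_le_one (t : ENNReal) : expNeg t ≤ 1 := by
  unfold expNeg
  split_ifs
  · exact zero_le_one
  · exact Real.exp_le_one_iff.mpr (neg_nonpos.mpr ENNReal.toReal_nonneg)

lemma measurable_expNeg : Measurable expNeg :=
  Measurable.ite (measurableSet_singleton ⊤) measurable_const ENNReal.measurable_toReal.neg.exp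

lemma Complex.norm_mul_ofReal_le {z : ℂ} {w : ℝ} (h₀ : 0 ≤ w) (h₁ : w ≤ 1) :
    ‖z * (w : ℂ)‖ ≤ ‖z‖ := by
  rw [norm_mul, Complex.norm_real, Real.norm_of_nonneg h₀]
  exact mul_le_of_le_one_right (norm_nonneg z) h₁

section PairWeight

variable {d : ℕ} {φ : Euc d → ENNReal}

lemma pairWeight_nonneg (k : ℕ) (x : Fin k → Euc d) : 0 ≤ pairWeight φ k x :=
  Finset.prod_nonneg fun _ _ => expNeg_nonneg _

lemma pairWeight_le_one (k : ℕ) (x : Fin k → Euc d) : pairWeight φ k x ≤ 1 :=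
  Finset.prod_le_one (fun _ _ => expNeg_nonneg _) fun _ _ => expNeg_le_one _

lemma measurable_pairWeight (hφ : Measurable φ) (k : ℕ) : Measurable (pairWeight φ k) :=
  Finset.measurable_prod _ fun p _ =>
    measurable_expNeg.comp (hφ.comp ((measurable_pi_apply p.1).sub (measurable_pi_apply p.2)))

end PairWeight

theorem Finset.norm_prod_sub_prod_le {ι R : Type*} [NormedCommRing R] [NormOneClass R]
    (s : Finset ι) {f g : ι → R} {M δ : ℝ} (hg : ∀ i ∈ s, ‖g i‖ ≤ M)
    (hfg : ∀ i ∈ s, ‖f i - g i‖ ≤ δ) :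
    ‖∏ i ∈ s, f i - ∏ i ∈ s, g i‖ ≤ (M + δ) ^ s.card - M ^ s.card := by
  induction s using Finset.cons_induction with
  | empty => simp
  | cons a s ha ih =>
    simp only [Finset.forall_mem_cons] at hg hfg
    have hM : 0 ≤ M := (norm_nonneg _).trans hg.1
    have hf : ‖∏ i ∈ s, f i‖ ≤ (M + δ) ^ s.card := by
      refine (Finset.norm_prod_le s f).trans <|
        (Finset.prod_le_prod (fun _ _ => norm_nonneg _) fun i hi => ?_).trans_eq
          (Finset.prod_const _)
      calc ‖f i‖ ≤ ‖g i‖ + ‖f i - g i‖ := norm_le_norm_add_norm_sub' (f i) (g i)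
        _ ≤ M + δ := add_le_add (hg.2 i hi) (hfg.2 i hi)
    have hsplit : f a * ∏ i ∈ s, f i - g a * ∏ i ∈ s, g i =
        (f a - g a) * ∏ i ∈ s, f i + g a * (∏ i ∈ s, f i - ∏ i ∈ s, g i) := by ring
    rw [Finset.prod_cons, Finset.prod_cons, Finset.card_cons, hsplit]
    calc _ ≤ ‖f a - g a‖ * ‖∏ i ∈ s, f i‖ + ‖g a‖ * ‖∏ i ∈ s, f i - ∏ i ∈ s, g i‖ :=
          (norm_add_le _ _).trans (add_le_add (norm_mul_le _ _) (norm_mul_le _ _))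
      _ ≤ δ * (M + δ) ^ s.card + M * ((M + δ) ^ s.card - M ^ s.card) := by
          gcongr
          · exact (norm_nonneg _).trans hfg.1
          · exact hfg.1
          · exact hg.1
          · exact ih hg.2 hfg.2
      _ = (M + δ) ^ (s.card + 1) - M ^ (s.card + 1) := by ring

lemma norm_inv_factorial_mul_setIntegral_pi_le {E : Type*} [MeasureSpace E]
    [SigmaFinite (volume : Measure E)] {Λ : Set E} (hΛ : volume Λ < ⊤) {k : ℕ}
    {F : (Fin k → E) → ℂ} {C : ℝ} (hF : ∀ x, ‖F x‖ ≤ C) :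
    ‖(k.factorial : ℂ)⁻¹ * ∫ x in Set.univ.pi fun _ => Λ, F x‖ ≤
      C * volume.real Λ ^ k / k.factorial := by
  have hvol : volume (Set.univ.pi fun _ : Fin k => Λ) = volume Λ ^ k := by
    simp [volume_pi, Measure.pi_pi]
  have hI := norm_setIntegral_le_of_norm_le_const (hvol ▸ ENNReal.pow_lt_top hΛ)
    fun x (_ : x ∈ Set.univ.pi fun _ => Λ) => hF x
  rw [measureReal_def, hvol, ENNReal.toReal_pow, ← measureReal_def] at hI
  rw [norm_mul, norm_inv, Complex.norm_natCast, inv_mul_eq_div]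
  gcongr

lemma Real.hasSum_pow_div_factorial (a : ℝ) :
    HasSum (fun k => a ^ k / k.factorial) (Real.exp a) := by
  rw [Real.exp_eq_exp_ℝ]
  exact NormedSpace.expSeries_div_hasSum_exp a

section PartitionFunction

variable {d : ℕ} {φ : Euc d → ENNReal} {Λ : Set (Euc d)}

def zTerm (φ : Euc d → ENNReal) (Λ : Set (Euc d)) (μ : Euc d → ℂ) (k : ℕ) : ℂ :=
  (k.factorial : ℂ)⁻¹ * ∫ x in Set.univ.pi fun _ : Fin k => Λ,
    (∏ i, μ (x i)) * ((pairWeight φ k x : ℝ) : ℂ)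

lemma ZΛ_eq_tsum_zTerm (μ : Euc d → ℂ) : ZΛ φ Λ μ = ∑' k, zTerm φ Λ μ k := rfl

lemma norm_prod_mul_pairWeight_le {μ : Euc d → ℂ} {M : ℝ} (hM : ∀ x, ‖μ x‖ ≤ M) (k : ℕ)
    (x : Fin k → Euc d) : ‖(∏ i, μ (x i)) * ((pairWeight φ k x : ℝ) : ℂ)‖ ≤ M ^ k := by
  refine (Complex.norm_mul_ofReal_le (pairWeight_nonneg k x) (pairWeight_le_one k x)).trans ?_
  refine (Finset.norm_prod_le _ _).trans ?_
  simpa using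
    Finset.prod_le_prod (fun _ _ => norm_nonneg _) fun i (_ : i ∈ Finset.univ) => hM (x i)

lemma norm_zTerm_le (hΛ : volume Λ < ⊤) {μ : Euc d → ℂ} {M : ℝ} (hM : ∀ x, ‖μ x‖ ≤ M)
    (k : ℕ) : ‖zTerm φ Λ μ k‖ ≤ (volume.real Λ * M) ^ k / k.factorial := by
  rw [mul_pow, mul_comm]
  exact norm_inv_factorial_mul_setIntegral_pi_le hΛ (norm_prod_mul_pairWeight_le hM k)

lemma integrableOn_prod_mul_pairWeight (hφ : Measurable φ) (hΛ : volume Λ < ⊤)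
    {μ : Euc d → ℂ} (hμ : Measurable μ) {M : ℝ} (hM : ∀ x, ‖μ x‖ ≤ M) (k : ℕ) :
    IntegrableOn (fun x : Fin k → Euc d => (∏ i, μ (x i)) * ((pairWeight φ k x : ℝ) : ℂ))
      (Set.univ.pi fun _ => Λ) := by
  have hvol : volume (Set.univ.pi fun _ : Fin k => Λ) < ⊤ := by
    simpa [volume_pi, Measure.pi_pi] using ENNReal.pow_lt_top hΛ
  refine Integrable.mono' (integrableOn_const hvol.ne) ?_
    (Eventually.of_forall (norm_prod_mul_pairWeight_le hM k))
  exact ((Finset.measurable_prod _ fun i _ => hμ.comp (measurable_pi_apply i)).mul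
    (Complex.measurable_ofReal.comp (measurable_pairWeight hφ k))).aestronglyMeasurable

lemma norm_zTerm_sub_le (hφ : Measurable φ) (hΛ : volume Λ < ⊤) {μ₁ μ₂ : Euc d → ℂ}
    (hμ₁ : Measurable μ₁) (hμ₂ : Measurable μ₂) {M δ : ℝ} (hM : ∀ x, ‖μ₂ x‖ ≤ M)
    (hδ : ∀ x, ‖μ₁ x - μ₂ x‖ ≤ δ) (k : ℕ) :
    ‖zTerm φ Λ μ₁ k - zTerm φ Λ μ₂ k‖ ≤
      (volume.real Λ * (M + δ)) ^ k / k.factorial - (volume.real Λ * M) ^ k / k.factorial := by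
  have hM₁ : ∀ x, ‖μ₁ x‖ ≤ M + δ := fun x =>
    (norm_le_norm_add_norm_sub' _ _).trans (add_le_add (hM x) (hδ x))
  have hdiff : zTerm φ Λ μ₁ k - zTerm φ Λ μ₂ k = (k.factorial : ℂ)⁻¹ *
      ∫ x in Set.univ.pi fun _ : Fin k => Λ, ((∏ i, μ₁ (x i)) - ∏ i, μ₂ (x i)) *
        ((pairWeight φ k x : ℝ) : ℂ) := by
    simp only [zTerm, sub_mul]
    rw [integral_sub (integrableOn_prod_mul_pairWeight hφ hΛ hμ₁ hM₁ k)
      (integrableOn_prod_mul_pairWeight hφ hΛ hμ₂ hM k), mul_sub]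
  have hbound : ∀ x : Fin k → Euc d, ‖((∏ i, μ₁ (x i)) - ∏ i, μ₂ (x i)) *
      ((pairWeight φ k x : ℝ) : ℂ)‖ ≤ (M + δ) ^ k - M ^ k := fun x =>
    (Complex.norm_mul_ofReal_le (pairWeight_nonneg k x) (pairWeight_le_one k x)).trans <| by
      simpa using Finset.norm_prod_sub_prod_le Finset.univ (fun i _ => hM (x i))
        fun i _ => hδ (x i)
  rw [hdiff]
  refine (norm_inv_factorial_mul_setIntegral_pi_le hΛ hbound).trans_eq ?_
  rw [mul_pow, mul_pow]
  ring

lemma norm_ZΛ_le (hΛ : volume Λ < ⊤) {μ : Euc d → ℂ} {M : ℝ} (hM : ∀ x, ‖μ x‖ ≤ M) :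
    ‖ZΛ φ Λ μ‖ ≤ Real.exp (volume.real Λ * M) :=
  tsum_of_norm_bounded (Real.hasSum_pow_div_factorial _) (norm_zTerm_le hΛ hM)

lemma norm_ZΛ_sub_le (hφ : Measurable φ) (hΛ : volume Λ < ⊤) {μ₁ μ₂ : Euc d → ℂ}
    (hμ₁ : Measurable μ₁) (hμ₂ : Measurable μ₂) {M δ : ℝ} (hM : ∀ x, ‖μ₂ x‖ ≤ M)
    (hδ : ∀ x, ‖μ₁ x - μ₂ x‖ ≤ δ) :
    ‖ZΛ φ Λ μ₁ - ZΛ φ Λ μ₂‖ ≤ δ * volume.real Λ * Real.exp (volume.real Λ * (M + δ)) := by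
  set V := volume.real Λ
  have hM₁ : ∀ x, ‖μ₁ x‖ ≤ M + δ := fun x =>
    (norm_le_norm_add_norm_sub' _ _).trans (add_le_add (hM x) (hδ x))
  have hsummable {ν : Euc d → ℂ} {N : ℝ} (hN : ∀ x, ‖ν x‖ ≤ N) : Summable (zTerm φ Λ ν) :=
    (Real.hasSum_pow_div_factorial _).summable.of_norm_bounded (norm_zTerm_le hΛ hN)
  rw [ZΛ_eq_tsum_zTerm, ZΛ_eq_tsum_zTerm, ← (hsummable hM₁).tsum_sub (hsummable hM)]
  calc _ ≤ Real.exp (V * (M + δ)) - Real.exp (V * M) :=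
        tsum_of_norm_bounded
          ((Real.hasSum_pow_div_factorial _).sub (Real.hasSum_pow_div_factorial _))
          (norm_zTerm_sub_le hφ hΛ hμ₁ hμ₂ hM hδ)
    _ ≤ δ * V * Real.exp (V * (M + δ)) := by
        have := mul_le_mul_of_nonneg_left (Real.add_one_le_exp (V * M - V * (M + δ)))
          (Real.exp_pos (V * (M + δ))).le
        rw [← Real.exp_add, add_sub_cancel] at this
        nlinarith

end PartitionFunction

lemma norm_div_sub_div_le {𝕜 : Type*} [NormedField 𝕜] {a b c d : 𝕜} {z : ℝ} (hz : 0 < z)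
    (hb : z ≤ ‖b‖) (hd : z ≤ ‖d‖) :
    ‖a / b - c / d‖ ≤ (‖a - c‖ * ‖d‖ + ‖c‖ * ‖d - b‖) / z ^ 2 := by
  have hb₀ : b ≠ 0 := norm_pos_iff.mp (hz.trans_le hb)
  have hd₀ : d ≠ 0 := norm_pos_iff.mp (hz.trans_le hd)
  rw [div_sub_div _ _ hb₀ hd₀, norm_div, norm_mul, sq]
  have hnum : a * d - b * c = (a - c) * d + c * (d - b) := by ring
  rw [hnum]
  gcongr
  exact (norm_add_le _ _).trans (add_le_add (norm_mul_le _ _) (norm_mul_le _ _))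

section Density

variable {d : ℕ} {φ : Euc d → ENNReal} {Λ : Set (Euc d)}

lemma norm_apply_mul_ZΛ_sub_le (hφ : Measurable φ) (hΛ : volume Λ < ⊤) {μ₁ μ₂ : Euc d → ℂ}
    (hμ₁ : Measurable μ₁) (hμ₂ : Measurable μ₂) {w : Euc d → ℝ} (hw : Measurable w)
    (hw₀ : ∀ x, 0 ≤ w x) (hw₁ : ∀ x, w x ≤ 1) {M δ : ℝ} (hM : ∀ x, ‖μ₂ x‖ ≤ M)
    (hδ : ∀ x, ‖μ₁ x - μ₂ x‖ ≤ δ) (v : Euc d) :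
    ‖μ₁ v * ZΛ φ Λ (fun x => μ₁ x * w x) - μ₂ v * ZΛ φ Λ (fun x => μ₂ x * w x)‖ ≤
      δ * Real.exp (volume.real Λ * (M + δ)) * (1 + M * volume.real Λ) := by
  have hweight {a : ℂ} (x : Euc d) : ‖a * w x‖ ≤ ‖a‖ :=
    Complex.norm_mul_ofReal_le (hw₀ x) (hw₁ x)
  have hM₁ : ∀ x, ‖μ₁ x‖ ≤ M + δ := fun x =>
    (norm_le_norm_add_norm_sub' _ _).trans (add_le_add (hM x) (hδ x))
  have hM₀ : 0 ≤ M := (norm_nonneg _).trans (hM v)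
  have hZ₁ := norm_ZΛ_le (φ := φ) hΛ fun x => (hweight x).trans (hM₁ x)
  have hZ := norm_ZΛ_sub_le (μ₁ := fun x => μ₁ x * w x) (μ₂ := fun x => μ₂ x * w x) hφ hΛ
    (hμ₁.mul (Complex.measurable_ofReal.comp hw)) (hμ₂.mul (Complex.measurable_ofReal.comp hw))
    (fun x => (hweight x).trans (hM x)) fun x => by rw [← sub_mul]; exact (hweight x).trans (hδ x)
  rw [show ∀ a₁ a₂ b₁ b₂ : ℂ, a₁ * b₁ - a₂ * b₂ = (a₁ - a₂) * b₁ + a₂ * (b₁ - b₂) by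
    intros; ring]
  refine (norm_add_le _ _).trans ?_
  rw [norm_mul, norm_mul]
  calc _ ≤ δ * Real.exp (volume.real Λ * (M + δ)) +
        M * (δ * volume.real Λ * Real.exp (volume.real Λ * (M + δ))) := by
        gcongr
        exacts [(norm_nonneg _).trans (hδ v), hδ v, hM v]
    _ = _ := by ring

lemma norm_densityΛ_sub_le (hφ : Measurable φ) (hΛ : volume Λ < ⊤) {μ₁ μ₂ : Euc d → ℂ}
    (hμ₁ : Measurable μ₁) (hμ₂ : Measurable μ₂) {M δ z : ℝ} (hM : ∀ x, ‖μ₂ x‖ ≤ M)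
    (hδ : ∀ x, ‖μ₁ x - μ₂ x‖ ≤ δ) (hz : 0 < z) (hz₁ : z ≤ ‖ZΛ φ Λ μ₁‖)
    (hz₂ : z ≤ ‖ZΛ φ Λ μ₂‖) (v : Euc d) :
    ‖densityΛ φ Λ μ₁ v - densityΛ φ Λ μ₂ v‖ ≤
      δ * (Real.exp (volume.real Λ * (M + δ)) ^ 2 * (1 + 2 * M * volume.real Λ) / z ^ 2) := by
  set V := volume.real Λ
  set E := Real.exp (V * (M + δ))
  have hM₀ : 0 ≤ M := (norm_nonneg _).trans (hM v)
  have hδ₀ : 0 ≤ δ := (norm_nonneg _).trans (hδ v)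
  have hV₀ : 0 ≤ V := measureReal_nonneg
  have hE : Real.exp (V * M) ≤ E := Real.exp_le_exp.mpr (by nlinarith)
  set w : Euc d → ℝ := fun x => expNeg (φ (v - x))
  have hw : Measurable w := measurable_expNeg.comp (hφ.comp (measurable_const.sub measurable_id))
  have hZw₂ : ‖μ₂ v * ZΛ φ Λ (fun x => μ₂ x * w x)‖ ≤ M * E := by
    rw [norm_mul]
    gcongr
    · exact hM v
    · exact (norm_ZΛ_le hΛ fun x => (Complex.norm_mul_ofReal_le (expNeg_nonneg _)
        (expNeg_le_one _)).trans (hM x)).trans hE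
  refine (norm_div_sub_div_le hz hz₁ hz₂).trans ?_
  rw [mul_div_assoc']
  gcongr
  calc _ ≤ δ * E * (1 + M * V) * E + M * E * (δ * V * E) := by
        gcongr
        · exact norm_apply_mul_ZΛ_sub_le hφ hΛ hμ₁ hμ₂ hw (fun _ => expNeg_nonneg _)
            (fun _ => expNeg_le_one _) hM hδ v
        · exact (norm_ZΛ_le hΛ hM).trans hE
        · rw [norm_sub_rev]
          exact norm_ZΛ_sub_le hφ hΛ hμ₁ hμ₂ hM hδ
    _ = δ * (E ^ 2 * (1 + 2 * M * V)) := by ring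

end Density

lemma exists_half_norm_ZΛ_le {d : ℕ} {φ : Euc d → ENNReal} {Λ : Set (Euc d)}
    (hφ : Measurable φ) (hΛ : volume Λ < ⊤) {lam : Euc d → ℂ} (hlam : Measurable lam) {M : ℝ}
    (hM : ∀ x, ‖lam x‖ ≤ M) (hZ : ZΛ φ Λ lam ≠ 0) :
    ∃ ε > 0, ∀ μ : Euc d → ℂ, Measurable μ → (∀ x, ‖μ x - lam x‖ ≤ ε) →
      ‖ZΛ φ Λ lam‖ / 2 ≤ ‖ZΛ φ Λ μ‖ := by
  set V := volume.real Λ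
  set L := V * Real.exp (V * (M + 1))
  have hZ₀ : 0 < ‖ZΛ φ Λ lam‖ := norm_pos_iff.mpr hZ
  refine ⟨min 1 (‖ZΛ φ Λ lam‖ / (2 * (L + 1))), by positivity, fun μ hμ hε => ?_⟩
  set ε := min 1 (‖ZΛ φ Λ lam‖ / (2 * (L + 1)))
  have hε₀ : 0 < ε := by positivity
  have hε₁ : ε ≤ 1 := min_le_left _ _
  have hεL : ε * L ≤ ‖ZΛ φ Λ lam‖ / 2 := by
    have := min_le_right 1 (‖ZΛ φ Λ lam‖ / (2 * (L + 1)))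
    rw [le_div_iff₀ (by positivity)] at this
    nlinarith
  have hclose : ‖ZΛ φ Λ μ - ZΛ φ Λ lam‖ ≤ ‖ZΛ φ Λ lam‖ / 2 := by
    refine (norm_ZΛ_sub_le hφ hΛ hμ hlam hM hε).trans (le_trans ?_ hεL)
    have hM₀ : 0 ≤ M := (norm_nonneg _).trans (hM 0)
    rw [mul_assoc]
    gcongr
    change V * Real.exp (V * (M + ε)) ≤ V * Real.exp (V * (M + 1))
    gcongr
  linarith [norm_sub_norm_le (ZΛ φ Λ lam) (ZΛ φ Λ μ), norm_sub_rev (ZΛ φ Λ lam) (ZΛ φ Λ μ)]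

theorem density_uniformly_continuous_general
    (d : ℕ)
    (φ : Euc d → ENNReal) (hφmeas : Measurable φ)
    (Λ : Set (Euc d)) (hΛbdd : Bornology.IsBounded Λ)
    (lam : Euc d → ℂ) (hlam_meas : Measurable lam)
    (hlam_bdd : ∃ M : ℝ, ∀ x, ‖lam x‖ ≤ M)
    (hzf : TotallyZeroFreeOn φ Λ lam) :
    ∃ ε > 0, ∀ η > 0, ∃ δ > 0,
      ∀ lam' lam'' : Euc d → ℂ,
        Measurable lam' → Measurable lam'' →
        (∀ x ∉ Λ, lam' x = 0) → (∀ x ∉ Λ, lam'' x = 0) →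
        (∃ M : ℝ, ∀ x, ‖lam' x‖ ≤ M) →
        (∃ M : ℝ, ∀ x, ‖lam'' x‖ ≤ M) →
        (∀ x, ‖lam' x - lam x‖ < ε) →
        (∀ x, ‖lam'' x - lam x‖ < ε) →
        ZΛ φ Λ lam' ≠ 0 ∧ ZΛ φ Λ lam'' ≠ 0 ∧
          ((∀ x, ‖lam' x - lam'' x‖ < δ) →
            ∀ v ∈ Λ, ‖densityΛ φ Λ lam' v - densityΛ φ Λ lam'' v‖ < η) := by
  obtain ⟨M, hM⟩ := hlam_bdd
  have hΛ : volume Λ < ⊤ := hΛbdd.measure_lt_top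
  have hZ : ZΛ φ Λ lam ≠ 0 := by
    simpa using hzf (fun _ => 1) measurable_const fun _ => ⟨zero_le_one, le_rfl⟩
  obtain ⟨ε, hε, hnear⟩ := exists_half_norm_ZΛ_le hφmeas hΛ hlam_meas hM hZ
  set z := ‖ZΛ φ Λ lam‖ / 2
  have hz : 0 < z := by positivity
  set V := volume.real Λ
  have hM₀ : 0 ≤ M := (norm_nonneg _).trans (hM 0)
  set K := Real.exp (V * (M + 1 + 1)) ^ 2 * (1 + 2 * (M + 1) * V) / z ^ 2 with hKdef
  refine ⟨min ε 1, by positivity, fun η hη => ⟨min 1 (η / (K + 1)), by positivity, ?_⟩⟩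
  intro lam' lam'' hlam' hlam'' _ _ _ _ hε' hε''
  have hz' := hnear lam' hlam' fun x => (hε' x).le.trans (min_le_left _ _)
  have hz'' := hnear lam'' hlam'' fun x => (hε'' x).le.trans (min_le_left _ _)
  refine ⟨norm_pos_iff.mp (hz.trans_le hz'), norm_pos_iff.mp (hz.trans_le hz''), fun hδ v _ => ?_⟩
  set δ := min 1 (η / (K + 1))
  have hM'' : ∀ x, ‖lam'' x‖ ≤ M + 1 := fun x =>
    (norm_le_norm_add_norm_sub' _ _).trans
      (add_le_add (hM x) ((hε'' x).le.trans (min_le_right _ _)))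
  calc _ ≤ δ * (Real.exp (V * (M + 1 + δ)) ^ 2 * (1 + 2 * (M + 1) * V) / z ^ 2) :=
        norm_densityΛ_sub_le hφmeas hΛ hlam' hlam'' hM'' (fun x => (hδ x).le) hz hz' hz'' v
    _ ≤ η / (K + 1) * K := by
        gcongr
        · exact min_le_right _ _
        · rw [hKdef]
          gcongr
          exact min_le_left _ _
    _ < η := by
        rw [div_mul_eq_mul_div, div_lt_iff₀ (by positivity)]
        nlinarith

/-- Lemma 2.6: near a bounded totally zero-free activity `𝛌` the partition function
does not vanish and `ρ_{𝛌'}(v)` is uniformly continuous in `𝛌'`, with a modulus of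
continuity uniform in `v`. -/
theorem density_uniformly_continuous
    (d : ℕ) (hd : 1 ≤ d)
    (φ : Euc d → ENNReal) (hφmeas : Measurable φ)
    (hφsymm : ∀ x, φ (-x) = φ x)
    (Λ : Set (Euc d)) (hΛmeas : MeasurableSet Λ) (hΛbdd : Bornology.IsBounded Λ)
    (lam : Euc d → ℂ) (hlam_meas : Measurable lam)
    (hlam_supp : ∀ x ∉ Λ, lam x = 0)
    (hlam_bdd : ∃ M : ℝ, ∀ x, ‖lam x‖ ≤ M)
    (hzf : TotallyZeroFreeOn φ Λ lam) :
    ∃ ε > 0, ∀ η > 0, ∃ δ > 0,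
      ∀ lam' lam'' : Euc d → ℂ,
        Measurable lam' → Measurable lam'' →
        (∀ x ∉ Λ, lam' x = 0) → (∀ x ∉ Λ, lam'' x = 0) →
        (∃ M : ℝ, ∀ x, ‖lam' x‖ ≤ M) →
        (∃ M : ℝ, ∀ x, ‖lam'' x‖ ≤ M) →
        (∀ x, ‖lam' x - lam x‖ < ε) →
        (∀ x, ‖lam'' x - lam x‖ < ε) →
        ZΛ φ Λ lam' ≠ 0 ∧ ZΛ φ Λ lam'' ≠ 0 ∧
          ((∀ x, ‖lam' x - lam'' x‖ < δ) →
            ∀ v ∈ Λ, ‖densityΛ φ Λ lam' v - densityΛ φ Λ lam'' v‖ < η) :=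
  density_uniformly_continuous_general d φ hφmeas Λ hΛbdd lam hlam_meas hlam_bdd hzf

end
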